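/- arXiv:1703.01421 — 4 statements merged into one kernel-verified Lean document; each statement's English description precedes it below -/
import Mathlib

section
/- Let G be a connected undirected graph with vertex set V = {1,...,n} and edge set E, and let w : E → ℝ≥0 be an edge weighting. Let the objective be F_w(μ) = (1/2)‖Y − μ‖² + λ · Σ_{{i,j}∈E} w(i,j)·𝟙{μ_i ≠ μ_j} for fixed Y ∈ ℝⁿ and λ ≥ 0. Suppose μ̂ ∈ ℝⁿ is a (τ, δℤ)-local-minimizer of F_w, i.e., for every vector μ̃ obtained from μ̂ by replacing the values on an arbitrary subset of vertices by a single common value c ∈ δℤ, one has F_w(μ̂) − τ ≤ F_w(μ̃). Then for any vector μ ∈ (δℤ)ⁿ whose entries take k distinct values, F_w(μ̂) ≤ (1/2)‖Y − μ‖² + 2λ·‖Dμ‖_w + k·τ, where ‖Dμ‖_w = Σ_{{i,j}∈E} w(i,j)·𝟙{μ_i ≠ μ_j}. -/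
open Finset
open scoped Classical

noncomputable section

/-- Weighted `l0` cut penalty `‖Dμ‖_w = Σ_{{i,j}∈E} w(i,j)·𝟙{μ_i ≠ μ_j}`. -/
def cutW {n : ℕ} (E : Finset (Sym2 (Fin n))) (w : Sym2 (Fin n) → ℝ) (μ : Fin n → ℝ) : ℝ :=
  ∑ e ∈ E, if ∃ i ∈ e, ∃ j ∈ e, μ i ≠ μ j then w e else 0

/-- The objective `F_w(μ) = (1/2)‖Y − μ‖² + λ·‖Dμ‖_w`. -/
def Fw {n : ℕ} (E : Finset (Sym2 (Fin n))) (w : Sym2 (Fin n) → ℝ) (Y : Fin n → ℝ) (lam : ℝ)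
    (μ : Fin n → ℝ) : ℝ :=
  (1/2) * ∑ i, (Y i - μ i)^2 + lam * cutW E w μ

/-- `μt` is a `δℤ`-expansion of `μ`: some subset of coordinates is replaced by a
single common value `c ∈ δℤ`. -/
def IsDeltaExpansion (δ : ℝ) {n : ℕ} (μ μt : Fin n → ℝ) : Prop :=
  ∃ c : ℝ, (∃ m : ℤ, c = δ * m) ∧ ∀ i, μt i = μ i ∨ μt i = c

/-!
For each value `c` taken by `μ`, overwrite `μhat` by `c` on the level set `{μ = c}`; this is a
`δℤ`-expansion of `μhat`, so local minimality bounds `F_w(μhat) - τ` by its objective. Summing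
over the `k` values, every vertex sees its data term `(Y i - μ i)²` once and `(Y i - μhat i)²`
`k - 1` times, while an edge `{i, j}` is cut at most `k - 1` times where `μhat` cuts it, plus at
most twice (for `c = μ i` and `c = μ j`) where `μ` cuts it. Hence
`k (F_w(μhat) - τ) ≤ ½‖Y - μ‖² + 2λ‖Dμ‖_w + (k - 1) F_w(μhat)`.
-/

def fillLevelSet {ι : Type*} (μhat μ : ι → ℝ) (c : ℝ) : ι → ℝ :=
  fun i => if μ i = c then c else μhat i

lemma isDeltaExpansion_fillLevelSet {n : ℕ} {δ c : ℝ} (hc : ∃ m : ℤ, c = δ * m)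
    (μhat μ : Fin n → ℝ) : IsDeltaExpansion δ μhat (fillLevelSet μhat μ c) := by
  refine ⟨c, hc, fun i => ?_⟩
  unfold fillLevelSet
  split_ifs <;> simp

lemma sum_ite_eq_self_else (C : Finset ℝ) {a : ℝ} (ha : a ∈ C) (b : ℝ) (g : ℝ → ℝ) :
    ∑ c ∈ C, g (if a = c then c else b) = g a + (#C - 1 : ℝ) * g b := by
  rw [← add_sum_erase C _ ha, if_pos rfl, ← cast_card_erase_of_mem ha, ← nsmul_eq_mul,
    ← sum_const]
  congr 1
  exact sum_congr rfl fun c hc => by rw [if_neg (ne_of_mem_erase hc).symm]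

lemma sum_sum_fillLevelSet {ι : Type*} [Fintype ι] (μhat μ : ι → ℝ) (g : ι → ℝ → ℝ) :
    ∑ c ∈ univ.image μ, ∑ i, g i (fillLevelSet μhat μ c i)
      = ∑ i, g i (μ i) + (#(univ.image μ) - 1 : ℝ) * ∑ i, g i (μhat i) := by
  rw [sum_comm, mul_sum, ← sum_add_distrib]
  exact sum_congr rfl fun i _ =>
    sum_ite_eq_self_else _ (mem_image_of_mem μ (mem_univ i)) _ (g i)

/-- Edge `{i, j}` with `a = μ i`, `b = μ j`, `x = μhat i`, `y = μhat j`: filling level `c` cuts it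
only as `μhat` does when `c ≠ a, b`, and only where `μ` cuts it when `c ∈ {a, b}`. -/
lemma edge_cut_fill_le {W : ℝ} (hW : 0 ≤ W) (a b x y c : ℝ) :
    (if (if a = c then c else x) ≠ (if b = c then c else y) then W else 0)
      ≤ (if c ≠ a then (if x ≠ y then W else 0) else 0)
        + (if a = c then (if a ≠ b then W else 0) else 0)
        + (if b = c then (if a ≠ b then W else 0) else 0) := by
  split_ifs <;> simp_all

lemma sum_edge_cut_fill_le (C : Finset ℝ) {W : ℝ} (hW : 0 ≤ W) {a b : ℝ} (ha : a ∈ C)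
    (hb : b ∈ C) (x y : ℝ) :
    ∑ c ∈ C, (if (if a = c then c else x) ≠ (if b = c then c else y) then W else 0)
      ≤ (#C - 1 : ℝ) * (if x ≠ y then W else 0) + 2 * (if a ≠ b then W else 0) := by
  refine (sum_le_sum fun c _ => edge_cut_fill_le hW a b x y c).trans_eq ?_
  rw [sum_add_distrib, sum_add_distrib, sum_ite_eq, sum_ite_eq, if_pos ha, if_pos hb,
    ← sum_filter, filter_ne', sum_const, nsmul_eq_mul, cast_card_erase_of_mem ha]
  ring

lemma Sym2.exists_mem_mk_apply_ne_iff {α β : Type*} (f : α → β) (i j : α) :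
    (∃ a ∈ s(i, j), ∃ b ∈ s(i, j), f a ≠ f b) ↔ f i ≠ f j := by
  simp [Sym2.mem_iff, or_and_right, exists_or, ne_comm]

lemma sum_cutW_fillLevelSet_le {n : ℕ} (E : Finset (Sym2 (Fin n))) {w : Sym2 (Fin n) → ℝ}
    (hw : ∀ e ∈ E, 0 ≤ w e) (μhat μ : Fin n → ℝ) :
    ∑ c ∈ univ.image μ, cutW E w (fillLevelSet μhat μ c)
      ≤ (#(univ.image μ) - 1 : ℝ) * cutW E w μhat + 2 * cutW E w μ := by
  unfold cutW
  rw [sum_comm, mul_sum, mul_sum, ← sum_add_distrib]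
  refine sum_le_sum fun e he => ?_
  induction e using Sym2.ind with
  | _ i j =>
    simp only [Sym2.exists_mem_mk_apply_ne_iff]
    exact sum_edge_cut_fill_le _ (hw _ he) (mem_image_of_mem μ (mem_univ i))
      (mem_image_of_mem μ (mem_univ j)) _ _

theorem stmt0_general {n : ℕ} (E : Finset (Sym2 (Fin n)))
    (w : Sym2 (Fin n) → ℝ) (hw : ∀ e, 0 ≤ w e)
    (Y : Fin n → ℝ) (lam : ℝ) (hlam : 0 ≤ lam)
    (δ τ : ℝ)
    (μhat : Fin n → ℝ)
    (hloc : ∀ μt, IsDeltaExpansion δ μhat μt → Fw E w Y lam μhat - τ ≤ Fw E w Y lam μt)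
    (μ : Fin n → ℝ) (hμ : ∀ i, ∃ m : ℤ, μ i = δ * m)
    (k : ℕ) (hk : (Finset.univ.image μ).card = k) :
    Fw E w Y lam μhat ≤ (1/2) * ∑ i, (Y i - μ i)^2 + 2 * lam * cutW E w μ + k * τ := by
  have hloc_fill : ∀ c ∈ univ.image μ,
      Fw E w Y lam μhat - τ ≤ Fw E w Y lam (fillLevelSet μhat μ c) := by
    intro c hc
    obtain ⟨i, -, rfl⟩ := mem_image.1 hc
    exact hloc _ (isDeltaExpansion_fillLevelSet (hμ i) μhat μ)
  have hsum := sum_le_sum hloc_fill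
  have hdata := sum_sum_fillLevelSet μhat μ fun i x => (Y i - x) ^ 2
  have hcut :=
    mul_le_mul_of_nonneg_left (sum_cutW_fillLevelSet_le E (fun e _ => hw e) μhat μ) hlam
  simp only [Fw, sum_add_distrib, ← mul_sum, sum_const, nsmul_eq_mul] at hsum
  rw [hk] at hsum hdata hcut
  unfold Fw
  linarith

theorem stmt0 {n : ℕ} (E : Finset (Sym2 (Fin n)))
    (hconn : (SimpleGraph.fromEdgeSet (E : Set (Sym2 (Fin n)))).Connected)
    (w : Sym2 (Fin n) → ℝ) (hw : ∀ e, 0 ≤ w e)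
    (Y : Fin n → ℝ) (lam : ℝ) (hlam : 0 ≤ lam)
    (δ τ : ℝ) (hδ : 0 < δ) (hτ : 0 ≤ τ)
    (μhat : Fin n → ℝ)
    (hloc : ∀ μt, IsDeltaExpansion δ μhat μt → Fw E w Y lam μhat - τ ≤ Fw E w Y lam μt)
    (μ : Fin n → ℝ) (hμ : ∀ i, ∃ m : ℤ, μ i = δ * m)
    (k : ℕ) (hk : (Finset.univ.image μ).card = k) :
    Fw E w Y lam μhat ≤ (1/2) * ∑ i, (Y i - μ i)^2 + 2 * lam * cutW E w μ + k * τ :=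
  stmt0_general E w hw Y lam hlam δ τ μhat hloc μ hμ k hk

end
end

section
/- Fix a ≥ 0 and an integer k ≥ 1, and let M_l = ∫₀^∞ r^l · exp(−(r + a)²/2) dr for l ≥ 0. Then: (a) M_{k+1} = −a·M_k + k·M_{k−1} (integration by parts); (b) M_{k+1}·M_{k−1} ≥ M_k² (Cauchy–Schwarz); and consequently (c) M_{k+1}/M_{k−1} ≥ ((√(a² + 4k) − a)/2)² = (2k/(a + √(a² + 4k)))². -/
open MeasureTheory

noncomputable section

set_option maxHeartbeats 1000000 in
theorem stmt11 (a : ℝ) (ha : 0 ≤ a) (k : ℕ) (hk : 1 ≤ k)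
    (M : ℕ → ℝ)
    (hM : ∀ l, M l = ∫ r in Set.Ioi (0 : ℝ), r ^ l * Real.exp (-(r + a) ^ 2 / 2)) :
    M (k + 1) = -a * M k + k * M (k - 1) ∧
    M k ^ 2 ≤ M (k + 1) * M (k - 1) ∧
    ((Real.sqrt (a ^ 2 + 4 * k) - a) / 2) ^ 2 ≤ M (k + 1) / M (k - 1) ∧
    ((Real.sqrt (a ^ 2 + 4 * k) - a) / 2) ^ 2 =
      (2 * k / (a + Real.sqrt (a ^ 2 + 4 * k))) ^ 2 := by
  obtain ⟨m, rfl⟩ : ∃ m, k = m + 1 := ⟨k - 1, (Nat.succ_pred_eq_of_pos hk).symm⟩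
  set f : ℕ → ℝ → ℝ := fun l r => r ^ l * Real.exp (-(r + a) ^ 2 / 2) with hf
  have hcont : ∀ l, Continuous (f l) := by
    intro l
    exact (continuous_pow l).mul (Real.continuous_exp.comp (by continuity))
  have hint : ∀ l, IntegrableOn (f l) (Set.Ioi 0) := by
    intro l
    have hg : IntegrableOn (fun r : ℝ => r ^ (l : ℝ) * Real.exp (-(1/2) * r ^ 2))
        (Set.Ioi 0) :=
      integrableOn_rpow_mul_exp_neg_mul_sq (by norm_num) (by
        have : (0:ℝ) ≤ l := Nat.cast_nonneg l
        linarith)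
    refine Integrable.mono hg ((hcont l).aestronglyMeasurable.restrict) ?_
    filter_upwards [ae_restrict_mem measurableSet_Ioi] with r hr
    have h0 : (0:ℝ) < r := hr
    have h1 : r ^ (l : ℝ) = r ^ l := Real.rpow_natCast r l
    rw [Real.norm_eq_abs, Real.norm_eq_abs, abs_of_nonneg (by positivity),
      abs_of_nonneg (by positivity), h1]
    refine mul_le_mul_of_nonneg_left ?_ (by positivity)
    apply Real.exp_le_exp.2
    nlinarith
  have hpos : ∀ l, 0 < M l := by
    intro l
    rw [hM l]
    rw [setIntegral_pos_iff_support_of_nonneg_ae ?_ (hint l)]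
    · refine lt_of_lt_of_le ?_ (measure_mono (show Set.Ioi (0:ℝ) ⊆
        Function.support (f l) ∩ Set.Ioi 0 from ?_))
      · simp [Real.volume_Ioi]
      · intro r hr
        have h0 : (0:ℝ) < r := hr
        refine ⟨?_, hr⟩
        have : 0 < f l r := by positivity
        exact this.ne'
    · filter_upwards [ae_restrict_mem measurableSet_Ioi] with r hr
      have h0 : (0:ℝ) < r := hr
      positivity
  -- part (a): integration by parts
  have parta : M (m + 2) = -a * M (m + 1) + (m + 1 : ℝ) * M m := by
    set F : ℝ → ℝ := fun r => r ^ (m + 1) * Real.exp (-(r + a) ^ 2 / 2) with hF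
    set g : ℝ → ℝ := fun r =>
      ((m + 1 : ℝ) * r ^ m - r ^ (m + 1) * (r + a)) * Real.exp (-(r + a) ^ 2 / 2) with hg
    have hderiv : ∀ r : ℝ, HasDerivAt F (g r) r := by
      intro r
      have he : HasDerivAt (fun r : ℝ => Real.exp (-(r + a) ^ 2 / 2))
          (-(r + a) * Real.exp (-(r + a) ^ 2 / 2)) r := by
        have h1 : HasDerivAt (fun r : ℝ => -(r + a) ^ 2 / 2) (-(r + a)) r := by
          have h2 : HasDerivAt (fun r : ℝ => (r + a)) 1 r :=
            (hasDerivAt_id r).add_const a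
          have h3 := ((h2.pow 2).neg.div_const 2 : HasDerivAt (fun r : ℝ => -(r + a) ^ 2 / 2) _ r)
          exact h3.congr_deriv (by push_cast; ring)
        have := h1.exp
        convert this using 1
        ring
      have hp : HasDerivAt (fun r : ℝ => r ^ (m + 1)) ((m + 1 : ℝ) * r ^ m) r := by
        simpa using hasDerivAt_pow (m + 1) r
      have := (hp.mul he : HasDerivAt (fun r : ℝ => r ^ (m + 1) * Real.exp (-(r + a) ^ 2 / 2)) _ r)
      refine this.congr_deriv ?_
      simp only [hg]
      ring
    have hgint : IntegrableOn g (Set.Ioi 0) := by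
      have : g = fun r => (m + 1 : ℝ) * f m r - (f (m + 2) r + a * f (m + 1) r) := by
        funext r
        simp only [hg, hf]
        ring
      rw [this]
      exact (((hint m).const_mul _).sub ((hint (m + 2)).add ((hint (m + 1)).const_mul a)))
    have htends : Filter.Tendsto F Filter.atTop (nhds 0) := by
      apply tendsto_of_tendsto_of_tendsto_of_le_of_le' tendsto_const_nhds
        (Real.tendsto_pow_mul_exp_neg_atTop_nhds_zero (m + 1))
      · filter_upwards [Filter.eventually_ge_atTop (0:ℝ)] with r hr
        simp only [hF]
        positivity
      · filter_upwards [Filter.eventually_ge_atTop (2:ℝ)] with r hr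
        simp only [hF]
        refine mul_le_mul_of_nonneg_left ?_ (by positivity)
        apply Real.exp_le_exp.2
        nlinarith
    have hibp := integral_Ioi_of_hasDerivAt_of_tendsto'
      (f := F) (f' := g) (a := 0) (fun x _ => hderiv x) hgint htends
    have hF0 : F 0 = 0 := by simp [hF]
    rw [hF0, sub_zero] at hibp
    have hsplit : ∫ r in Set.Ioi (0:ℝ), g r
        = (m + 1 : ℝ) * M m - (M (m + 2) + a * M (m + 1)) := by
      have hgeq : ∀ r ∈ Set.Ioi (0:ℝ),
          g r = (m + 1 : ℝ) * f m r - (f (m + 2) r + a * f (m + 1) r) := by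
        intro r _
        simp only [hg, hf]
        ring
      have i1 : IntegrableOn (fun r : ℝ => (m + 1 : ℝ) * f m r) (Set.Ioi 0) :=
        (hint m).const_mul _
      have i2 : IntegrableOn (fun r : ℝ => f (m + 2) r + a * f (m + 1) r) (Set.Ioi 0) :=
        (hint (m + 2)).add ((hint (m + 1)).const_mul a)
      have i3 : IntegrableOn (fun r : ℝ => a * f (m + 1) r) (Set.Ioi 0) :=
        (hint (m + 1)).const_mul a
      rw [setIntegral_congr_fun measurableSet_Ioi hgeq,
        integral_sub i1 i2, integral_add (hint (m + 2)) i3,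
        integral_const_mul, integral_const_mul, hM, hM, hM]
    rw [hsplit] at hibp
    linarith
  -- part (b): Cauchy-Schwarz via quadratic
  have partb : M (m + 1) ^ 2 ≤ M (m + 2) * M m := by
    have hquad : ∀ t : ℝ, 0 ≤ M m * (t * t) + (2 * M (m + 1)) * t + M (m + 2) := by
      intro t
      have hnn : 0 ≤ ∫ r in Set.Ioi (0:ℝ),
          (t ^ 2 * f m r + 2 * t * f (m + 1) r + f (m + 2) r) := by
        apply setIntegral_nonneg measurableSet_Ioi
        intro r hr
        have h0 : (0:ℝ) < r := hr
        have : t ^ 2 * f m r + 2 * t * f (m + 1) r + f (m + 2) r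
            = r ^ m * Real.exp (-(r + a) ^ 2 / 2) * (t + r) ^ 2 := by
          simp only [hf]; ring
        rw [this]
        positivity
      have heq : ∫ r in Set.Ioi (0:ℝ),
          (t ^ 2 * f m r + 2 * t * f (m + 1) r + f (m + 2) r)
          = t ^ 2 * M m + 2 * t * M (m + 1) + M (m + 2) := by
        have i1 : IntegrableOn (fun r : ℝ => t ^ 2 * f m r) (Set.Ioi 0) :=
          (hint m).const_mul _
        have i2 : IntegrableOn (fun r : ℝ => 2 * t * f (m + 1) r) (Set.Ioi 0) :=
          (hint (m + 1)).const_mul _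
        have i4 : IntegrableOn (fun r : ℝ => t ^ 2 * f m r + 2 * t * f (m + 1) r)
            (Set.Ioi 0) := i1.add i2
        rw [integral_add i4 (hint (m + 2)), integral_add i1 i2,
          integral_const_mul, integral_const_mul, hM, hM, hM]
      rw [heq] at hnn
      linarith
    have hd := discrim_le_zero hquad
    rw [discrim] at hd
    nlinarith
  -- set up sqrt facts
  set s : ℝ := Real.sqrt (a ^ 2 + 4 * (m + 1 : ℕ)) with hs
  have hs0 : 0 ≤ s := Real.sqrt_nonneg _
  have hs2 : s ^ 2 = a ^ 2 + 4 * (m + 1 : ℕ) := Real.sq_sqrt (by positivity)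
  have hm1 : (0:ℝ) < ((m + 1 : ℕ) : ℝ) := by exact_mod_cast Nat.succ_pos m
  have hsa : a ≤ s := by
    rw [show a = Real.sqrt (a ^ 2) from (Real.sqrt_sq ha).symm]
    exact Real.sqrt_le_sqrt (by linarith)
  have hspos : 0 < s := by nlinarith
  -- part (c) first inequality
  have partc : ((s - a) / 2) ^ 2 ≤ M (m + 2) / M m := by
    set x : ℝ := Real.sqrt (M (m + 2) / M m) with hx
    have hx0 : 0 ≤ x := Real.sqrt_nonneg _
    have hx2 : x ^ 2 = M (m + 2) / M m :=
      Real.sq_sqrt (le_of_lt (div_pos (hpos (m + 2)) (hpos m)))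
    have hQ : M (m + 1) ≤ x * M m := by
      have h1 : M (m + 1) ≤ Real.sqrt (M (m + 2) * M m) := by
        rw [Real.le_sqrt (hpos (m + 1)).le (by nlinarith [hpos (m + 2), hpos m])]
        exact partb
      have h2 : x * M m = Real.sqrt (M (m + 2) * M m) := by
        rw [hx, show M (m + 2) * M m = (M (m + 2) / M m) * (M m) ^ 2 by
          field_simp [(hpos m).ne'],
          Real.sqrt_mul (div_nonneg (hpos _).le (hpos _).le), Real.sqrt_sq (hpos m).le]
      linarith
    have hk : ((m + 1 : ℕ) : ℝ) * M m ≤ M (m + 2) + a * x * M m := by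
      have : M (m + 2) = -a * M (m + 1) + ((m + 1 : ℕ) : ℝ) * M m := by
        push_cast at parta ⊢; linarith
      nlinarith [hpos (m + 1)]
    have hkx : ((m + 1 : ℕ) : ℝ) ≤ x ^ 2 + a * x := by
      have hMm := hpos m
      rw [hx2]
      rw [div_add' _ _ _ hMm.ne', le_div_iff₀ hMm]
      nlinarith
    have hsx : s ≤ 2 * x + a := by
      have h1 : s ^ 2 ≤ (2 * x + a) ^ 2 := by
        rw [hs2]; nlinarith
      have h2 : 0 ≤ 2 * x + a := by linarith
      nlinarith
    have h3 : 0 ≤ (s - a) / 2 := by linarith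
    have h4 : (s - a) / 2 ≤ x := by linarith
    calc ((s - a) / 2) ^ 2 ≤ x ^ 2 := by nlinarith
      _ = M (m + 2) / M m := hx2
  -- assemble, handling ℕ subtraction and casts
  have hsub : m + 1 - 1 = m := rfl
  have hc2 : ((s - a) / 2) ^ 2 = (2 * ((m + 1 : ℕ) : ℝ) / (a + s)) ^ 2 := by
    have hane : a + s ≠ 0 := by positivity
    rw [div_pow, div_pow, div_eq_div_iff (by norm_num) (by positivity)]
    have : (s - a) ^ 2 * (a + s) ^ 2 = ((s - a) * (a + s)) ^ 2 := by ring
    rw [this]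
    have h5 : (s - a) * (a + s) = 4 * ((m + 1 : ℕ) : ℝ) := by nlinarith
    rw [h5]
    ring
  refine ⟨?_, ?_, ?_, ?_⟩
  · rw [hsub]; push_cast at parta ⊢; linarith
  · rw [hsub]; exact partb
  · rw [hsub]; exact partc
  · exact hc2

end
end

section
/- Let Y ∈ ℝⁿ, λ ≥ 0, and let μ̂ ∈ ℝⁿ be a (τ, δℤ)-local-minimizer of F_w(μ) = (1/2)‖Y − μ‖² + λ‖Dμ‖_w over a graph G with edge weighting w. Let μ^δ ∈ (δℤ)ⁿ be arbitrary. Then for every vertex i, (1/2)(μ̂_i − Y_i)² ≤ (1/2)(μ^δ_i − Y_i)² + λ·Σ_{j : {i,j}∈E} w(i,j) + τ. Summing over vertices: (1/2)‖μ̂ − Y‖² ≤ (1/2)‖μ^δ − Y‖² + 2λ·w(E) + n·τ. -/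
open Finset
open scoped Classical

noncomputable section

theorem stmt15 {n : ℕ} (E : Finset (Sym2 (Fin n)))
    (w : Sym2 (Fin n) → ℝ) (hw : ∀ e, 0 ≤ w e)
    (Y : Fin n → ℝ) (lam : ℝ) (hlam : 0 ≤ lam)
    (δ τ : ℝ) (hδ : 0 < δ) (hτ : 0 ≤ τ)
    (μhat : Fin n → ℝ)
    (hloc : ∀ μt, IsDeltaExpansion δ μhat μt → Fw E w Y lam μhat - τ ≤ Fw E w Y lam μt)
    (μδ : Fin n → ℝ) (hμδ : ∀ i, ∃ m : ℤ, μδ i = δ * m) :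
    (∀ i : Fin n,
      (1/2) * (μhat i - Y i) ^ 2 ≤
        (1/2) * (μδ i - Y i) ^ 2 + lam * (∑ e ∈ E.filter (fun e => i ∈ e), w e) + τ) ∧
    (1/2) * ∑ i, (μhat i - Y i) ^ 2 ≤
      (1/2) * ∑ i, (μδ i - Y i) ^ 2 + 2 * lam * (∑ e ∈ E, w e) + n * τ := by
  have key : ∀ i : Fin n,
      (1/2) * (μhat i - Y i) ^ 2 ≤
        (1/2) * (μδ i - Y i) ^ 2 + lam * (∑ e ∈ E.filter (fun e => i ∈ e), w e) + τ := by
    intro i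
    set μt := Function.update μhat i (μδ i) with hμt
    have hexp : IsDeltaExpansion δ μhat μt := by
      obtain ⟨m, hm⟩ := hμδ i
      refine ⟨μδ i, ⟨m, hm⟩, fun j => ?_⟩
      by_cases h : j = i
      · subst h; right; simp [μt]
      · left; simp [μt, Function.update_of_ne h]
    have hF := hloc μt hexp
    have h1 : ∑ j, (Y j - μt j)^2 - ∑ j, (Y j - μhat j)^2
        = (Y i - μδ i)^2 - (Y i - μhat i)^2 := by
      rw [← Finset.sum_sub_distrib, Finset.sum_eq_single i]
      · simp [μt]
      · intro j _ hj; simp [μt, Function.update_of_ne hj]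
      · simp
    have hcut : cutW E w μt ≤ cutW E w μhat + ∑ e ∈ E.filter (fun e => i ∈ e), w e := by
      unfold cutW
      rw [Finset.sum_filter, ← Finset.sum_add_distrib]
      apply Finset.sum_le_sum
      intro e he
      by_cases hie : i ∈ e
      · simp only [hie, if_true]
        have h1 : (if ∃ a ∈ e, ∃ b ∈ e, μt a ≠ μt b then w e else 0) ≤ w e := by
          split
          · exact le_refl _
          · exact hw e
        have h2 : (0:ℝ) ≤ (if ∃ a ∈ e, ∃ b ∈ e, μhat a ≠ μhat b then w e else 0) := by
          split
          · exact hw e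
          · exact le_refl _
        linarith
      · simp only [hie, if_false, add_zero]
        have heq : ∀ a ∈ e, μt a = μhat a := by
          intro a ha
          have : a ≠ i := fun h => hie (h ▸ ha)
          simp [μt, Function.update_of_ne this]
        have : (∃ a ∈ e, ∃ b ∈ e, μt a ≠ μt b) ↔ (∃ a ∈ e, ∃ b ∈ e, μhat a ≠ μhat b) := by
          constructor
          · rintro ⟨a, ha, b, hb, hab⟩
            exact ⟨a, ha, b, hb, by rw [← heq a ha, ← heq b hb]; exact hab⟩
          · rintro ⟨a, ha, b, hb, hab⟩
            exact ⟨a, ha, b, hb, by rw [heq a ha, heq b hb]; exact hab⟩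
        exact le_of_eq (if_congr this rfl rfl)
    have hcut' : lam * cutW E w μt
        ≤ lam * cutW E w μhat + lam * ∑ e ∈ E.filter (fun e => i ∈ e), w e := by
      calc lam * cutW E w μt ≤ lam * (cutW E w μhat + ∑ e ∈ E.filter (fun e => i ∈ e), w e) :=
            mul_le_mul_of_nonneg_left hcut hlam
        _ = _ := by ring
    unfold Fw at hF
    have e1 : (Y i - μhat i)^2 = (μhat i - Y i)^2 := by ring
    have e2 : (Y i - μδ i)^2 = (μδ i - Y i)^2 := by ring
    nlinarith [hF, h1, hcut']
  refine ⟨key, ?_⟩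
  have hsum := Finset.sum_le_sum (fun i (_ : i ∈ Finset.univ) => key i)
  have hW : ∑ i : Fin n, ∑ e ∈ E.filter (fun e => i ∈ e), w e ≤ 2 * ∑ e ∈ E, w e := by
    have h1 : ∑ i : Fin n, ∑ e ∈ E.filter (fun e => i ∈ e), w e
        = ∑ e ∈ E, ((Finset.univ.filter (fun i : Fin n => i ∈ e)).card : ℝ) * w e := by
      simp_rw [Finset.sum_filter]
      rw [Finset.sum_comm]
      refine Finset.sum_congr rfl fun e _ => ?_
      rw [← Finset.sum_filter, Finset.sum_const, nsmul_eq_mul]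
    rw [h1]
    have h2 : ∀ e : Sym2 (Fin n), (Finset.univ.filter (fun i : Fin n => i ∈ e)).card ≤ 2 := by
      intro e
      induction e using Sym2.ind with
      | _ a b =>
        have hsub : Finset.univ.filter (fun i : Fin n => i ∈ s(a, b)) ⊆ {a, b} := by
          intro x hx
          simp only [Finset.mem_filter, Sym2.mem_iff] at hx
          simp only [Finset.mem_insert, Finset.mem_singleton]
          exact hx.2
        calc (Finset.univ.filter (fun i : Fin n => i ∈ s(a, b))).card
            ≤ ({a, b} : Finset (Fin n)).card := Finset.card_le_card hsub
          _ ≤ 2 := Finset.card_insert_le a {b} |>.trans (by simp)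
    rw [two_mul, ← Finset.sum_add_distrib]
    refine Finset.sum_le_sum fun e he => ?_
    have : ((Finset.univ.filter (fun i : Fin n => i ∈ e)).card : ℝ) ≤ 2 := by
      exact_mod_cast h2 e
    nlinarith [hw e]
  have hrhs : ∑ i : Fin n, ((1/2) * (μδ i - Y i) ^ 2
        + lam * (∑ e ∈ E.filter (fun e => i ∈ e), w e) + τ)
      = (1/2) * ∑ i, (μδ i - Y i) ^ 2
        + lam * ∑ i : Fin n, ∑ e ∈ E.filter (fun e => i ∈ e), w e + n * τ := by
    rw [Finset.sum_add_distrib, Finset.sum_add_distrib, ← Finset.mul_sum, ← Finset.mul_sum,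
      Finset.sum_const, Finset.card_univ, Fintype.card_fin, nsmul_eq_mul]
  rw [← Finset.mul_sum, hrhs] at hsum
  have : lam * ∑ i : Fin n, ∑ e ∈ E.filter (fun e => i ∈ e), w e ≤ 2 * lam * ∑ e ∈ E, w e := by
    calc lam * ∑ i : Fin n, ∑ e ∈ E.filter (fun e => i ∈ e), w e
        ≤ lam * (2 * ∑ e ∈ E, w e) := mul_le_mul_of_nonneg_left hW hlam
      _ = 2 * lam * ∑ e ∈ E, w e := by ring
  linarith

end
end

section
/- For every x > 0, Γ(x + 1) ≤ √(2π) · ((x + 1/2)/e)^{x + 1/2}, where Γ is the Gamma function. -/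
open Real Filter Topology


lemma core (u : ℝ) (hu0 : 0 ≤ u) (hu1 : u < 1) :
    (1+u)*Real.log (1+u) - (1-u)*Real.log (1-u) ≤ 2*u := by
  set f : ℝ → ℝ := fun t => 2*t - ((1+t)*Real.log (1+t) - (1-t)*Real.log (1-t)) with hf
  have key : ∀ t ∈ Set.Ico (0:ℝ) 1, HasDerivAt f (-(Real.log (1+t) + Real.log (1-t))) t := by
    intro t ht
    obtain ⟨h0, h1⟩ := ht
    have h1p : (0:ℝ) < 1 + t := by linarith
    have h1m : (0:ℝ) < 1 - t := by linarith
    have d1 : HasDerivAt (fun t : ℝ => (1+t)*Real.log (1+t)) (Real.log (1+t) + 1) t := by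
      have := ((hasDerivAt_id t).const_add 1).log h1p.ne'
      have := (((hasDerivAt_id t).const_add 1).mul this)
      refine this.congr_deriv ?_
      simp only [id]
      field_simp
    have d2 : HasDerivAt (fun t : ℝ => (1-t)*Real.log (1-t)) (-Real.log (1-t) - 1) t := by
      have hd : HasDerivAt (fun t : ℝ => 1 - t) (-1) t := by
        simpa using (hasDerivAt_id t).const_sub 1
      have := hd.log h1m.ne'
      have := hd.mul this
      refine this.congr_deriv ?_
      field_simp
      ring
    have := ((hasDerivAt_id t).const_mul 2).sub (d1.sub d2)
    refine this.congr_deriv ?_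
    ring
  have mono : MonotoneOn f (Set.Ico (0:ℝ) 1) := by
    apply monotoneOn_of_deriv_nonneg (convex_Ico 0 1)
    · exact ContinuousOn.congr (continuousOn_of_forall_continuousAt
        (fun t ht => (key t ht).continuousAt)) (fun x hx => rfl)
    · intro t ht
      rw [interior_Ico] at ht
      exact ((key t ⟨le_of_lt ht.1, ht.2⟩).differentiableAt).differentiableWithinAt
    · intro t ht
      rw [interior_Ico] at ht
      rw [(key t ⟨le_of_lt ht.1, ht.2⟩).deriv]
      have h1p : (0:ℝ) < 1 + t := by linarith [ht.1]
      have h1m : (0:ℝ) < 1 - t := by linarith [ht.2]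
      have : Real.log (1+t) + Real.log (1-t) = Real.log ((1+t)*(1-t)) := (Real.log_mul h1p.ne' h1m.ne').symm
      rw [this]
      have : (1+t)*(1-t) ≤ 1 := by nlinarith [ht.1]
      have := Real.log_nonpos (by positivity) this
      linarith
  have h0 : f 0 = 0 := by simp [hf]
  have := mono (Set.mem_Ico.mpr ⟨le_refl 0, one_pos⟩) (Set.mem_Ico.mpr ⟨hu0, hu1⟩) hu0
  rw [h0] at this
  simp only [hf] at this
  linarith



noncomputable def g (x : ℝ) : ℝ :=
  Real.log (Real.Gamma (x+1)) - (x+1/2)*Real.log (x+1/2) + (x+1/2)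

lemma step_core (c : ℝ) (hc : 1 ≤ c) :
    (c+1/2)*Real.log (c+1/2) - (c-1/2)*Real.log (c-1/2) ≤ Real.log c + 1 := by
  have hc0 : (0:ℝ) < c := by linarith
  set u : ℝ := 1/(2*c) with hu
  have hu0 : 0 ≤ u := by positivity
  have hu1 : u < 1 := by
    rw [hu, div_lt_one (by linarith)]; linarith
  have h := core u hu0 hu1
  have e1 : (1:ℝ) + u = (c+1/2)/c := by rw [hu]; field_simp
  have e2 : (1:ℝ) - u = (c-1/2)/c := by rw [hu]; field_simp
  have l1 : Real.log (1+u) = Real.log (c+1/2) - Real.log c := by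
    rw [e1, Real.log_div (by linarith) hc0.ne']
  have l2 : Real.log (1-u) = Real.log (c-1/2) - Real.log c := by
    rw [e2, Real.log_div (by linarith : (c:ℝ) - 1/2 ≠ 0) hc0.ne']
  rw [l1, l2, e1, e2] at h
  have h' := mul_le_mul_of_nonneg_left h hc0.le
  have e3 : c * ((c+1/2)/c * (Real.log (c+1/2) - Real.log c) -
      (c-1/2)/c * (Real.log (c-1/2) - Real.log c)) =
      (c+1/2)*Real.log (c+1/2) - (c-1/2)*Real.log (c-1/2) - Real.log c := by
    field_simp; ring
  have e4 : c * (2*u) = 1 := by rw [hu]; field_simp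
  rw [e3, e4] at h'
  linarith

lemma g_step (x : ℝ) (hx : 0 < x) : g x ≤ g (x+1) := by
  have h1 : (0:ℝ) < x + 1 := by linarith
  have hG : Real.Gamma (x+1+1) = (x+1) * Real.Gamma (x+1) :=
    Real.Gamma_add_one h1.ne'
  have hGpos : 0 < Real.Gamma (x+1) := Real.Gamma_pos_of_pos h1
  have hlog : Real.log (Real.Gamma (x+1+1)) =
      Real.log (x+1) + Real.log (Real.Gamma (x+1)) := by
    rw [hG, Real.log_mul h1.ne' hGpos.ne']
  have key := step_core (x+1) (by linarith)
  unfold g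
  rw [hlog]
  have e5 : x + 1 + 1/2 = (x+1) + 1/2 := by ring
  have e6 : x + 1/2 = (x+1) - 1/2 := by ring
  rw [e5, e6]
  linarith

lemma g_le_add_nat (x : ℝ) (hx : 0 < x) (n : ℕ) : g x ≤ g (x + n) := by
  induction n with
  | zero => simp
  | succ k ih =>
    have h2 : g (x + k) ≤ g (x + k + 1) := g_step _ (by positivity)
    have e : ((k+1 : ℕ) : ℝ) = (k : ℝ) + 1 := by push_cast; ring
    rw [e, ← add_assoc]
    exact ih.trans h2


lemma lim_aux (a b : ℝ) :
    Tendsto (fun t : ℝ => (t + a) * (Real.log (t + b) - Real.log t)) atTop (𝓝 b) := by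
  have h1 : Tendsto (fun t : ℝ => t * Real.log (1 + b/t)) atTop (𝓝 b) :=
    Real.tendsto_mul_log_one_add_div_atTop b
  have h2 : Tendsto (fun t : ℝ => Real.log (1 + b/t)) atTop (𝓝 0) := by
    have : Tendsto (fun t : ℝ => 1 + b/t) atTop (𝓝 1) := by
      simpa using tendsto_const_nhds.add ((tendsto_const_nhds (x := b)).div_atTop tendsto_id)
    simpa [Function.comp_def] using ((Real.continuousAt_log one_ne_zero).tendsto.comp this)
  have h3 : Tendsto (fun t : ℝ => t * Real.log (1 + b/t) + a * Real.log (1 + b/t))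
      atTop (𝓝 (b + a * 0)) := h1.add (h2.const_mul a)
  rw [mul_zero, add_zero] at h3
  apply h3.congr'
  filter_upwards [eventually_gt_atTop (0:ℝ), eventually_gt_atTop (-b)] with t ht htb
  have ht0 : t ≠ 0 := ht.ne'
  have htb0 : 0 < t + b := by linarith
  have : Real.log (t + b) - Real.log t = Real.log (1 + b/t) := by
    rw [← Real.log_div htb0.ne' ht0]
    congr 1
    field_simp
  rw [this]; ring

lemma lim_aux_nat (a b : ℝ) :
    Tendsto (fun n : ℕ => ((n:ℝ) + a) * (Real.log ((n:ℝ) + b) - Real.log n)) atTop (𝓝 b) :=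
  (lim_aux a b).comp tendsto_natCast_atTop_atTop

lemma stirling_log :
    Tendsto (fun n : ℕ => Real.log (n.factorial) - ((n:ℝ)+1/2)*Real.log n + n) atTop
      (𝓝 (Real.log (Real.sqrt (2*Real.pi)))) := by
  have h := Stirling.tendsto_stirlingSeq_sqrt_pi
  have hπ : (0:ℝ) < Real.sqrt Real.pi := Real.sqrt_pos.mpr Real.pi_pos
  have hlog : Tendsto (fun n : ℕ => Real.log (Stirling.stirlingSeq n)) atTop
      (𝓝 (Real.log (Real.sqrt Real.pi))) := (Real.continuousAt_log hπ.ne').tendsto.comp h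
  have h2 : Tendsto (fun n : ℕ => Real.log (Stirling.stirlingSeq n) + 1/2 * Real.log 2) atTop
      (𝓝 (Real.log (Real.sqrt Real.pi) + 1/2 * Real.log 2)) := hlog.add_const _
  have heq : Real.log (Real.sqrt Real.pi) + 1/2 * Real.log 2 = Real.log (Real.sqrt (2*Real.pi)) := by
    rw [Real.log_sqrt Real.pi_pos.le, Real.log_sqrt (by positivity),
      Real.log_mul two_ne_zero Real.pi_pos.ne']
    ring
  rw [heq] at h2
  apply h2.congr'
  filter_upwards [eventually_ge_atTop 1] with n hn
  have hn0 : (0:ℝ) < (n:ℝ) := by exact_mod_cast hn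
  rw [Stirling.log_stirlingSeq_formula, Real.log_mul two_ne_zero hn0.ne',
    Real.log_div hn0.ne' (Real.exp_ne_zero 1), Real.log_exp]
  ring

theorem stmt18 (x : ℝ) (hx : 0 < x) :
    Real.Gamma (x + 1) ≤
      Real.sqrt (2 * Real.pi) * ((x + 1/2) / Real.exp 1) ^ (x + 1/2) := by
  set L : ℝ := Real.log (Real.sqrt (2*Real.pi)) with hL
  -- reduce to the logarithmic statement
  suffices h : g x ≤ L by
    have hGpos : 0 < Real.Gamma (x+1) := Real.Gamma_pos_of_pos (by linarith)
    have hxpos : (0:ℝ) < x + 1/2 := by linarith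
    have hRpos : (0:ℝ) < Real.sqrt (2*Real.pi) * ((x + 1/2) / Real.exp 1) ^ (x + 1/2) := by
      have : (0:ℝ) < (x + 1/2) / Real.exp 1 := by positivity
      positivity
    rw [← Real.exp_log hGpos, ← Real.exp_log hRpos]
    apply Real.exp_le_exp.mpr
    have hrw : Real.log (Real.sqrt (2*Real.pi) * ((x + 1/2) / Real.exp 1) ^ (x + 1/2)) =
        L + (x+1/2) * (Real.log (x+1/2) - 1) := by
      rw [Real.log_mul (by positivity) (by positivity),
        Real.log_rpow (by positivity), Real.log_div hxpos.ne' (Real.exp_ne_zero 1),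
        Real.log_exp]
    rw [hrw]
    unfold g at h
    linarith
  -- set up the interpolation data
  set k : ℕ := ⌈x⌉₊ - 1 with hk
  have hceil : 1 ≤ ⌈x⌉₊ := Nat.one_le_iff_ne_zero.mpr (by positivity)
  have hkc : ((k:ℝ)) = (⌈x⌉₊ : ℝ) - 1 := by
    rw [hk]; push_cast [hceil]; ring
  have hkx : (k:ℝ) < x := by
    rw [hkc]
    have := Nat.ceil_lt_add_one hx.le
    linarith
  have hxk : x ≤ (k:ℝ) + 1 := by
    rw [hkc]
    have := Nat.le_ceil x
    linarith
  set θ : ℝ := x - k with hθ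
  have hθ0 : 0 < θ := by rw [hθ]; linarith
  have hθ1 : θ ≤ 1 := by rw [hθ]; linarith
  -- the upper bound sequence
  set b : ℕ → ℝ := fun n =>
    (1-θ) * Real.log ((n+k).factorial) + θ * Real.log ((n+k+1).factorial)
      - ((n:ℝ) + (x + 1/2)) * Real.log ((n:ℝ) + (x + 1/2)) + ((n:ℝ) + (x + 1/2)) with hb
  -- step 1 : g (x + n) ≤ b n
  have hgb : ∀ n : ℕ, g (x + n) ≤ b n := by
    intro n
    have hu : ((n:ℝ) + k + 1) ∈ Set.Ioi (0:ℝ) := by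
      simp only [Set.mem_Ioi]; positivity
    have hv : ((n:ℝ) + k + 2) ∈ Set.Ioi (0:ℝ) := by
      simp only [Set.mem_Ioi]; positivity
    have hcvx := Real.convexOn_log_Gamma.2 hu hv (by linarith : (0:ℝ) ≤ 1 - θ) hθ0.le
      (by ring : (1-θ) + θ = 1)
    simp only [smul_eq_mul, Function.comp_apply] at hcvx
    have harg : (1-θ) * ((n:ℝ) + k + 1) + θ * ((n:ℝ) + k + 2) = x + n + 1 := by
      rw [hθ]; ring
    rw [harg] at hcvx
    have hg1 : Real.Gamma ((n:ℝ) + k + 1) = (n+k).factorial := by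
      have := Real.Gamma_nat_eq_factorial (n+k)
      rw [← this]; congr 1; push_cast; ring
    have hg2 : Real.Gamma ((n:ℝ) + k + 2) = (n+k+1).factorial := by
      have := Real.Gamma_nat_eq_factorial (n+k+1)
      rw [← this]; congr 1; push_cast; ring
    rw [hg1, hg2] at hcvx
    unfold g
    rw [hb]
    have e1 : x + (n:ℝ) + 1/2 = (n:ℝ) + (x + 1/2) := by ring
    rw [e1]
    show _ ≤ (1-θ) * Real.log ((n+k).factorial) + θ * Real.log ((n+k+1).factorial)
      - ((n:ℝ) + (x + 1/2)) * Real.log ((n:ℝ) + (x + 1/2)) + ((n:ℝ) + (x + 1/2))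
    exact add_le_add_left (sub_le_sub_right hcvx _) _
  -- step 2 : b tends to L
  have hbL : Tendsto b atTop (𝓝 L) := by
    have hs1 : Tendsto (fun n : ℕ => (Real.log ((n+k).factorial)
        - (((n+k:ℕ):ℝ)+1/2)*Real.log ((n+k:ℕ):ℝ) + ((n+k:ℕ):ℝ))) atTop (𝓝 L) :=
      stirling_log.comp (tendsto_add_atTop_nat k)
    have hs2 : Tendsto (fun n : ℕ => (Real.log ((n+k+1).factorial)
        - (((n+k+1:ℕ):ℝ)+1/2)*Real.log ((n+k+1:ℕ):ℝ) + ((n+k+1:ℕ):ℝ))) atTop (𝓝 L) :=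
      stirling_log.comp (tendsto_add_atTop_nat (k+1))
    have hA := lim_aux_nat ((k:ℝ)+1/2) (k:ℝ)
    have hB := lim_aux_nat ((k:ℝ)+3/2) ((k:ℝ)+1)
    have hC := lim_aux_nat (x+1/2) (x+1/2)
    have hcomb := ((hs1.const_mul (1-θ)).add (hs2.const_mul θ)).add
      (((hA.const_mul (1-θ)).add (hB.const_mul θ)).sub hC |>.add_const (1/2))
    have hval : (1-θ) * L + θ * L + ((1-θ)*(k:ℝ) + θ*((k:ℝ)+1) - (x+1/2) + 1/2) = L := by
      rw [hθ]; ring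
    rw [hval] at hcomb
    apply hcomb.congr'
    filter_upwards [eventually_ge_atTop 1] with n hn
    have hn0 : (0:ℝ) < (n:ℝ) := by exact_mod_cast hn
    rw [hb]
    push_cast
    rw [hθ]
    ring_nf
  -- conclude
  have hstep : ∀ n : ℕ, g x ≤ b n := fun n => (g_le_add_nat x hx n).trans (hgb n)
  exact ge_of_tendsto hbL (Eventually.of_forall hstep)
end
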